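/- arXiv:2010.11022 — 6 statements merged into one kernel-verified Lean document; each statement's English description precedes it below -/
import Mathlib

section
/- Let R be a commutative ring with a non-zero-divisor π such that R is π-adically complete and separated. If M is a finitely presented R-module with no π-torsion (π·m = 0 implies m = 0), then M is π-adically complete and separated, i.e. the natural map M → lim_n M/π^{n+1}M is an isomorphism. (Unnamed lemma in Section 2.1.) -/
/-!
Write `M` as a quotient of `R^b` by a finitely generated submodule `N`. Precompleteness passes
from `R` to `R^b` and then to its quotients, in particular to `M` and to `N`. Because `M` has no
`π`-torsion, `N ∩ π^n R^b = π^n N`; hence if `x ∈ R^b` maps into `⋂ π^n M`, the elements of `N`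
approximating `x` modulo `π^n R^b` form a Cauchy sequence in `N`, and its limit in `N` equals `x`
since `R^b` is separated.
-/

open Submodule

section

variable {R : Type*} [CommRing R] {I : Ideal R}

theorem AdicCompletion.pi_of {ι : Type*} (M : ι → Type*) [∀ i, AddCommGroup (M i)]
    [∀ i, Module R (M i)] (x : ∀ i, M i) :
    AdicCompletion.pi I M (AdicCompletion.of I _ x) = fun i ↦ AdicCompletion.of I (M i) (x i) := by
  ext i
  simp

instance IsHausdorff.pi {ι : Type*} (M : ι → Type*) [∀ i, AddCommGroup (M i)]
    [∀ i, Module R (M i)] [∀ i, IsHausdorff I (M i)] : IsHausdorff I (∀ i, M i) := by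
  rw [← AdicCompletion.of_injective_iff]
  intro x y hxy
  have h := congrArg (AdicCompletion.pi I M) hxy
  simp only [AdicCompletion.pi_of, funext_iff, AdicCompletion.of_inj] at h
  exact _root_.funext h

instance IsPrecomplete.pi {ι : Type*} [Finite ι] (M : ι → Type*) [∀ i, AddCommGroup (M i)]
    [∀ i, Module R (M i)] [∀ i, IsPrecomplete I (M i)] : IsPrecomplete I (∀ i, M i) := by
  classical
  have := Fintype.ofFinite ι
  rw [← AdicCompletion.of_surjective_iff]
  intro y
  choose x hx using fun i ↦ AdicCompletion.of_surjective I (M i) (AdicCompletion.pi I M y i)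
  refine ⟨x, (AdicCompletion.piEquivOfFintype I M).injective ?_⟩
  simp only [AdicCompletion.piEquivOfFintype_apply, AdicCompletion.pi_of]
  exact _root_.funext hx

theorem IsPrecomplete.of_surjective {M N : Type*} [AddCommGroup M] [Module R M]
    [AddCommGroup N] [Module R N] [IsPrecomplete I M] {f : M →ₗ[R] N}
    (hf : Function.Surjective f) : IsPrecomplete I N := by
  rw [← AdicCompletion.of_surjective_iff]
  intro y
  obtain ⟨x, rfl⟩ := AdicCompletion.map_surjective I hf y
  obtain ⟨m, rfl⟩ := AdicCompletion.of_surjective I M x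
  exact ⟨f m, (AdicCompletion.map_of I f m).symm⟩

theorem IsPrecomplete.of_finite [IsPrecomplete I R] (M : Type*) [AddCommGroup M] [Module R M]
    [Module.Finite R M] : IsPrecomplete I M := by
  obtain ⟨n, f, hf⟩ := Module.Finite.exists_fin' R M
  exact IsPrecomplete.of_surjective hf

theorem IsHausdorff.of_surjective {F M : Type*} [AddCommGroup F] [Module R F]
    [AddCommGroup M] [Module R M] [IsHausdorff I F] {g : F →ₗ[R] M}
    [IsPrecomplete I (LinearMap.ker g)] (hg : Function.Surjective g)
    (hker : ∀ n, (I ^ n • ⊤ : Submodule R F) ⊓ LinearMap.ker g ≤ I ^ n • LinearMap.ker g) :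
    IsHausdorff I M := by
  refine ⟨fun m hm ↦ ?_⟩
  obtain ⟨x, rfl⟩ := hg m
  have hlift : ∀ n, ∃ b ∈ (I ^ n • ⊤ : Submodule R F), g b = g x := by
    intro n
    rw [← mem_map, map_smul'', Submodule.map_top, LinearMap.range_eq_top.2 hg,
      ← sub_zero (g x), ← SModEq.sub_mem]
    exact hm n
  choose b hb hgb using hlift
  let a : ℕ → LinearMap.ker g := fun n ↦ ⟨x - b n, by simp [hgb]⟩
  have hcauchy : ∀ {n k}, n ≤ k →
      a n ≡ a k [SMOD (I ^ n • ⊤ : Submodule R (LinearMap.ker g))] := by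
    intro n k hnk
    rw [SModEq.sub_mem, mem_smul_top_iff]
    refine hker n ⟨?_, (a n - a k).2⟩
    simpa [a] using sub_mem (pow_smul_top_le I F hnk (hb k)) (hb n)
  obtain ⟨L, hL⟩ := IsPrecomplete.prec ‹_› hcauchy
  have hxL : x - L = 0 := by
    refine IsHausdorff.haus ‹_› (x - L) fun n ↦ ?_
    have hLn := (smul_mono_right _ le_top : I ^ n • LinearMap.ker g ≤ _)
      ((mem_smul_top_iff _ _ _).1 (SModEq.sub_mem.1 (hL n)))
    rw [SModEq.sub_mem, sub_zero, show x - (L : F) = b n + (a n - L) by simp [a]; abel]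
    exact add_mem (hb n) hLn
  simp [sub_eq_zero.1 hxL]

end

theorem Ideal.span_singleton_pow_smul_top_inf_ker_le {R F M : Type*} [CommRing R]
    [AddCommGroup F] [Module R F] [AddCommGroup M] [Module R M] (g : F →ₗ[R] M) {π : R}
    (hπ : IsSMulRegular M π) (n : ℕ) :
    (Ideal.span {π} ^ n • ⊤ : Submodule R F) ⊓ LinearMap.ker g ≤
      Ideal.span {π} ^ n • LinearMap.ker g := by
  rw [Ideal.span_singleton_pow, ideal_span_singleton_smul, ideal_span_singleton_smul]
  rintro _ ⟨hx, hker⟩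
  obtain ⟨y, -, rfl⟩ := (mem_smul_pointwise_iff_exists _ _ _).1 hx
  refine Submodule.smul_mem_pointwise_smul y (π ^ n) _ (LinearMap.mem_ker.2 ?_)
  exact (hπ.pow n).right_eq_zero_of_smul (by rwa [← map_smul])

theorem finitePresentation_torsionFree_isAdicComplete_general
    (R : Type*) [CommRing R] (π : R)
    (hR : IsAdicComplete (Ideal.span {π}) R)
    (M : Type*) [AddCommGroup M] [Module R M]
    (hfp : Module.FinitePresentation R M)
    (htf : ∀ m : M, π • m = 0 → m = 0) :
    IsAdicComplete (Ideal.span {π}) M := by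
  obtain ⟨b, g, hg⟩ := Module.Finite.exists_fin' R M
  have : Module.Finite R (LinearMap.ker g) :=
    Module.Finite.iff_fg.2 (Module.FinitePresentation.fg_ker g hg)
  have : IsPrecomplete (Ideal.span {π}) (LinearMap.ker g) := IsPrecomplete.of_finite _
  exact
    { toIsHausdorff := IsHausdorff.of_surjective hg
        (Ideal.span_singleton_pow_smul_top_inf_ker_le g (.of_right_eq_zero_of_smul htf))
      toIsPrecomplete := IsPrecomplete.of_surjective hg }

/-- **Unnamed lemma in Section 2.1.** Let `R` be a commutative ring with a non-zero-divisor
`π` such that `R` is `π`-adically complete and separated.  If `M` is a finitely presented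
`R`-module with no `π`-torsion, then `M` is `π`-adically complete and separated, i.e. the
natural map `M → lim_n M/π^(n+1)M` is an isomorphism. -/
theorem finitePresentation_torsionFree_isAdicComplete
    (R : Type*) [CommRing R] (π : R) (hπ : π ∈ nonZeroDivisors R)
    (hR : IsAdicComplete (Ideal.span {π}) R)
    (M : Type*) [AddCommGroup M] [Module R M]
    (hfp : Module.FinitePresentation R M)
    (htf : ∀ m : M, π • m = 0 → m = 0) :
    IsAdicComplete (Ideal.span {π}) M :=
  finitePresentation_torsionFree_isAdicComplete_general R π hR M hfp htf
end

section
/- Let A be a perfect commutative ring of characteristic 2 and W(A) its ring of 2-typical Witt vectors. Then 1 + 8·W(A) is contained in the set of squares of units of W(A): for every x ∈ W(A) there exists a unit u ∈ W(A)ˣ with u² = 1 + 8x. (Lemma 2.11(1).) -/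
open WittVector

namespace WittSqrtAux

variable {A : Type u} [CommRing A] [CharP A 2]

local notation "𝕎" => WittVector 2

lemma coeff_init (x : 𝕎 A) (n i : ℕ) :
    (init n x).coeff i = if i < n then x.coeff i else 0 := by
  simp [init, select, coeff_mk]

lemma coeff_two_pow_mul (z : 𝕎 A) (n : ℕ) :
    ∀ i < n, ((2 : 𝕎 A) ^ n * z).coeff i = 0 := by
  induction n generalizing z with
  | zero => intro i hi; omega
  | succ n ih =>
    intro i hi
    have key : (2 : 𝕎 A) ^ (n + 1) * z
        = verschiebung (frobenius ((2 : 𝕎 A) ^ n * z)) := by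
      rw [verschiebung_frobenius]
      push_cast
      ring
    rw [key]
    rcases i with _ | i
    · exact verschiebung_coeff_zero _
    · rw [verschiebung_coeff_succ, coeff_frobenius_charP]
      have := ih z i (by omega)
      rw [this]
      simp

lemma init_two_pow_mul (z : 𝕎 A) {n m : ℕ} (h : n ≤ m) :
    init n ((2 : 𝕎 A) ^ m * z) = 0 := by
  apply WittVector.ext
  intro i
  rw [coeff_init]
  split_ifs with hi
  · rw [coeff_two_pow_mul z m i (by omega)]; simp
  · simp

lemma init_add_two_pow_mul (a z : 𝕎 A) {n m : ℕ} (h : n ≤ m) :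
    init n (a + (2 : 𝕎 A) ^ m * z) = init n a := by
  rw [init_add, init_two_pow_mul z h, add_zero, init_init]

/-- If a sequence is Cauchy (successive differences divisible by `2^n`), its
coefficients stabilize and define a limit. -/
lemma exists_limit (s : ℕ → 𝕎 A)
    (hc : ∀ n, ∃ z, s (n + 1) = s n + (2 : 𝕎 A) ^ n * z) :
    ∃ y : 𝕎 A, ∀ n, init n y = init n (s n) := by
  have stab : ∀ n m, n ≤ m → init n (s m) = init n (s n) := by
    intro n m
    induction m with
    | zero =>
      intro h
      have hn : n = 0 := by omega
      subst hn; rfl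
    | succ m ih =>
      intro h
      rcases Nat.lt_or_ge n (m + 1) with h' | h'
      · have hnm : n ≤ m := by omega
        obtain ⟨z, hz⟩ := hc m
        rw [hz, init_add_two_pow_mul _ _ hnm, ih hnm]
      · have : n = m + 1 := by omega
        subst this; rfl
  have key : ∀ a b, a ≤ b → ∀ j, j < a → (s b).coeff j = (s a).coeff j := by
    intro a b hab j hj
    have := congrArg (fun w => WittVector.coeff w j) (stab a b hab)
    simpa [coeff_init, hj] using this
  refine ⟨mk 2 (fun i => (s (i + 1)).coeff i), ?_⟩
  intro n
  apply WittVector.ext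
  intro i
  rw [coeff_init, coeff_init]
  split_ifs with hi
  · rw [coeff_mk]
    rcases le_or_gt (i + 1) n with h | h
    · exact (key (i + 1) n h i (by omega)).symm
    · exact key n (i + 1) (by omega) i hi
  · rfl

noncomputable def sqrtSeq (x : 𝕎 A) : ℕ → 𝕎 A
  | 0 => 0
  | n + 1 => 2 * x - (sqrtSeq x n) ^ 2

noncomputable def invSeq (y : 𝕎 A) : ℕ → 𝕎 A
  | 0 => 1
  | n + 1 => 1 - 2 * y * invSeq y n

end WittSqrtAux

open WittSqrtAux in
/-- **Lemma 2.11(1).** Let `A` be a perfect commutative ring of characteristic `2` and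
`W(A)` its ring of `2`-typical Witt vectors.  Then `1 + 8·W(A)` is contained in the set of
squares of units of `W(A)`. -/
theorem one_add_eight_mul_is_square_of_unit_wittVector
    (A : Type u) [CommRing A] [CharP A 2] [PerfectRing A 2]
    (x : WittVector 2 A) :
    ∃ u : (WittVector 2 A)ˣ, (u : WittVector 2 A) ^ 2 = 1 + 8 * x := by
  set s : ℕ → WittVector 2 A := sqrtSeq x with hs
  have hs0 : s 0 = 0 := rfl
  have hsucc : ∀ n, s (n + 1) = 2 * x - (s n) ^ 2 := fun n => rfl
  -- every term of the sequence is divisible by 2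
  have h2 : ∀ n, ∃ w, s n = 2 * w := by
    intro n
    induction n with
    | zero => exact ⟨0, by rw [hs0]; ring⟩
    | succ n ih =>
      obtain ⟨w, hw⟩ := ih
      exact ⟨x - 2 * w ^ 2, by rw [hsucc, hw]; ring⟩
  -- the sequence is Cauchy
  have hc : ∀ n, ∃ z, s (n + 1) = s n + (2 : WittVector 2 A) ^ n * z := by
    intro n
    induction n with
    | zero => exact ⟨2 * x, by rw [hsucc, hs0]; ring⟩
    | succ n ih =>
      obtain ⟨z, hz⟩ := ih
      obtain ⟨w, hw⟩ := h2 n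
      obtain ⟨w', hw'⟩ := h2 (n + 1)
      refine ⟨-(z * (w + w')), ?_⟩
      have e1 : s (n + 2) = 2 * x - (s (n + 1)) ^ 2 := hsucc (n + 1)
      have e2 : s (n + 1) = 2 * x - (s n) ^ 2 := hsucc n
      linear_combination e1 - e2 + (-(s n + s (n + 1))) * hz
        - (2 : WittVector 2 A) ^ n * z * hw - (2 : WittVector 2 A) ^ n * z * hw'
  obtain ⟨y, hy⟩ := exists_limit s hc
  -- `y` is a fixed point
  have hfix : ∀ m, init m (2 * x - y ^ 2) = init m y := by
    intro m
    have hy2 : init m (y ^ 2) = init m ((s m) ^ 2) := by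
      rw [init_pow, hy m, ← init_pow]
    obtain ⟨z, hz⟩ := hc m
    calc init m (2 * x - y ^ 2)
        = init m (init m (2 * x) - init m (y ^ 2)) := init_sub _ _ _
      _ = init m (init m (2 * x) - init m ((s m) ^ 2)) := by rw [hy2]
      _ = init m (2 * x - (s m) ^ 2) := (init_sub _ _ _).symm
      _ = init m (s (m + 1)) := by rw [hsucc]
      _ = init m (s m) := by rw [hz, init_add_two_pow_mul _ _ le_rfl]
      _ = init m y := (hy m).symm
  have y_eq : y = 2 * x - y ^ 2 := by
    apply WittVector.ext
    intro n
    have := congrArg (fun w => WittVector.coeff w n) (hfix (n + 1))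
    simpa [coeff_init, Nat.lt_succ_self] using this.symm
  -- inverse of 1 + 2y
  set t : ℕ → WittVector 2 A := invSeq y with ht
  have ht0 : t 0 = 1 := rfl
  have htsucc : ∀ n, t (n + 1) = 1 - 2 * y * t n := fun n => rfl
  have hct : ∀ n, ∃ z, t (n + 1) = t n + (2 : WittVector 2 A) ^ n * z := by
    intro n
    induction n with
    | zero => exact ⟨-(2 * y), by rw [htsucc, ht0]; ring⟩
    | succ n ih =>
      obtain ⟨z, hz⟩ := ih
      refine ⟨-(y * z), ?_⟩
      have e1 : t (n + 2) = 1 - 2 * y * t (n + 1) := htsucc (n + 1)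
      have e2 : t (n + 1) = 1 - 2 * y * t n := htsucc n
      linear_combination e1 - e2 - 2 * y * hz
  obtain ⟨v, hv⟩ := exists_limit t hct
  have hfixv : ∀ m, init m (1 - 2 * y * v) = init m v := by
    intro m
    have hyv : init m (2 * y * v) = init m (2 * y * t m) := by
      rw [show (2 : WittVector 2 A) * y * v = (2 * y) * v by ring, init_mul, hv m,
        ← init_mul]
    obtain ⟨z, hz⟩ := hct m
    calc init m (1 - 2 * y * v)
        = init m (init m 1 - init m (2 * y * v)) := init_sub _ _ _
      _ = init m (init m 1 - init m (2 * y * t m)) := by rw [hyv]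
      _ = init m (1 - 2 * y * t m) := (init_sub _ _ _).symm
      _ = init m (t (m + 1)) := by rw [htsucc]
      _ = init m (t m) := by rw [hz, init_add_two_pow_mul _ _ le_rfl]
      _ = init m v := (hv m).symm
  have v_eq : v = 1 - 2 * y * v := by
    apply WittVector.ext
    intro n
    have := congrArg (fun w => WittVector.coeff w n) (hfixv (n + 1))
    simpa [coeff_init, Nat.lt_succ_self] using this.symm
  have huv : (1 + 2 * y) * v = 1 := by linear_combination v_eq
  refine ⟨Units.mkOfMulEqOne (1 + 2 * y) v huv, ?_⟩
  show (1 + 2 * y) ^ 2 = 1 + 8 * x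
  linear_combination (4 : WittVector 2 A) * y_eq
end

section
/- Let A be a perfect commutative ring of characteristic 2 and W(A) its ring of 2-typical Witt vectors. For a ∈ A, the unit 1 + 4[a] ∈ W(A)ˣ is the square of a unit of W(A) if and only if there exists c ∈ A with a = c² + c (i.e. a ∈ ℘(A), where ℘(c) = c² − c = c² + c in characteristic 2). In other words, a ↦ (class of 1 + 4[a]) defines an injective group homomorphism A/℘(A) → W(A)ˣ/(W(A)ˣ)². (Part of Lemma 2.11(2).) -/
noncomputable section
set_option linter.unusedSectionVars false

namespace WittSquareAux

open WittVector

variable {A : Type*} [CommRing A] [CharP A 2] [PerfectRing A 2]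

local notation "𝕎" => WittVector 2 A

/-- Injectivity of squaring in a perfect ring of characteristic 2. -/
lemma sq_inj {a b : A} (h : a ^ 2 = b ^ 2) : a = b :=
  (injective_frobenius A 2) (by simpa [frobenius_def] using h)

/-- `coeff 0` as a ring homomorphism. -/
def φ : 𝕎 →+* A := WittVector.ghostComponent 0

lemma φ_apply (x : 𝕎) : φ x = x.coeff 0 := by
  rw [φ, ghostComponent_apply, wittPolynomial_zero, MvPolynomial.aeval_X]

lemma two_mul_coeff_zero (x : 𝕎) : (2 * x).coeff 0 = 0 := by
  have h := WittVector.mul_charP_coeff_zero (p := 2) x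
  rw [mul_comm] at h
  simpa using h

lemma two_mul_coeff_succ (x : 𝕎) (i : ℕ) :
    (2 * x).coeff (i + 1) = x.coeff i ^ 2 := by
  have h := WittVector.mul_charP_coeff_succ (p := 2) x i
  rw [mul_comm] at h
  simpa using h

lemma two_cancel {x y : 𝕎} (h : 2 * x = 2 * y) : x = y := by
  ext i
  apply sq_inj
  rw [← two_mul_coeff_succ x i, ← two_mul_coeff_succ y i, h]

/-- `x` is divisible by 2 if its zeroth coefficient vanishes. -/
lemma exists_half {x : 𝕎} (hx : x.coeff 0 = 0) : ∃ z : 𝕎, x = 2 * z := by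
  refine ⟨(WittVector.frobeniusEquiv 2 A).symm (x.shift 1), ?_⟩
  have h1 : x = verschiebung (x.shift 1) := by
    have := WittVector.eq_iterate_verschiebung (x := x) (n := 1)
      (by intro i hi; interval_cases i; exact hx)
    simpa using this
  have h2 : WittVector.frobenius ((WittVector.frobeniusEquiv 2 A).symm (x.shift 1)) =
      x.shift 1 := (WittVector.frobeniusEquiv 2 A).apply_symm_apply _
  rw [← h2] at h1
  rw [WittVector.verschiebung_frobenius] at h1
  exact h1.trans (by push_cast; ring)

/-- Congruence modulo `2^n`, phrased via truncation. -/
def C (n : ℕ) (x y : 𝕎) : Prop := WittVector.truncate (p := 2) n x = WittVector.truncate n y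

lemma C_iff {n : ℕ} {x y : 𝕎} : C n x y ↔ ∀ i < n, x.coeff i = y.coeff i := by
  constructor
  · intro h i hi
    have := congrArg (fun t => TruncatedWittVector.coeff ⟨i, hi⟩ t) h
    simpa [WittVector.coeff_truncate] using this
  · intro h
    ext ⟨i, hi⟩
    simp only [WittVector.coeff_truncate]
    exact h i hi

lemma C.refl (n : ℕ) (x : 𝕎) : C n x x := rfl

lemma C.symm {n : ℕ} {x y : 𝕎} (h : C n x y) : C n y x := Eq.symm h

lemma C.trans {n : ℕ} {x y z : 𝕎} (h : C n x y) (h' : C n y z) : C n x z := Eq.trans h h'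

lemma C.add {n : ℕ} {x x' y y' : 𝕎} (h : C n x x') (h' : C n y y') :
    C n (x + y) (x' + y') := by
  unfold C at *; rw [map_add, map_add, h, h']

lemma C.sub {n : ℕ} {x x' y y' : 𝕎} (h : C n x x') (h' : C n y y') :
    C n (x - y) (x' - y') := by
  unfold C at *; rw [map_sub, map_sub, h, h']

lemma C.mul {n : ℕ} {x x' y y' : 𝕎} (h : C n x x') (h' : C n y y') :
    C n (x * y) (x' * y') := by
  unfold C at *; rw [map_mul, map_mul, h, h']

lemma C.mono {n m : ℕ} {x y : 𝕎} (h : C n x y) (hm : m ≤ n) : C m x y := by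
  rw [C_iff] at h ⊢
  exact fun i hi => h i (lt_of_lt_of_le hi hm)

lemma C.two {n : ℕ} {x y : 𝕎} (h : C n x y) : C (n + 1) (2 * x) (2 * y) := by
  rw [C_iff] at h ⊢
  intro i hi
  cases i with
  | zero => rw [two_mul_coeff_zero, two_mul_coeff_zero]
  | succ j =>
      rw [two_mul_coeff_succ, two_mul_coeff_succ, h j (by omega)]

lemma C_zero (x y : 𝕎) : C 0 x y := by rw [C_iff]; omega

lemma C.two_zero {n : ℕ} {x : 𝕎} (h : C n x 0) : C (n + 1) (2 * x) 0 := by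
  have h2 := h.two
  rwa [mul_zero] at h2

lemma C_pow2 (n : ℕ) (z : 𝕎) : C n (2 ^ n * z) 0 := by
  induction n with
  | zero => exact C_zero _ _
  | succ m ih =>
      have : (2 : 𝕎) ^ (m + 1) * z = 2 * (2 ^ m * z) := by ring
      rw [this]
      exact ih.two_zero

lemma eq_of_forall_C {x y : 𝕎} (h : ∀ n, C n x y) : x = y := by
  ext i
  exact (C_iff.mp (h (i + 1))) i (Nat.lt_succ_self i)

lemma exists_limit (f : ℕ → 𝕎) (hf : ∀ n, C n (f n) (f (n + 1))) :
    ∃ x : 𝕎, ∀ n, C n x (f n) := by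
  have key : ∀ m n, n ≤ m → C n (f n) (f m) := by
    intro m
    induction m with
    | zero =>
        intro n hn
        have hn0 : n = 0 := Nat.le_zero.mp hn
        subst hn0
        exact C.refl _ _
    | succ m ih =>
        intro n hn
        rcases Nat.lt_or_ge n (m + 1) with h | h
        · exact (ih n (by omega)).trans ((hf m).mono (by omega))
        · have : n = m + 1 := by omega
          subst this; exact C.refl _ _
  refine ⟨WittVector.mk 2 (fun i => (f (i + 1)).coeff i), ?_⟩
  intro n
  rw [C_iff]
  intro i hi
  have h1 : (f (i + 1)).coeff i = (f n).coeff i := by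
    have := key n (i + 1) (by omega)
    exact (C_iff.mp this) i (Nat.lt_succ_self i)
  simpa [WittVector.coeff_mk] using h1

/-- `1 + 2t` is invertible. -/
lemma exists_inv (t : 𝕎) : ∃ s : 𝕎, (1 + 2 * t) * s = 1 := by
  set r : 𝕎 := -(2 * t) with hr
  set g : ℕ → 𝕎 := fun n => ∑ i ∈ Finset.range n, r ^ i with hg
  have hrn : ∀ n, C n (r ^ n) 0 := by
    intro n
    have : r ^ n = 2 ^ n * (-t) ^ n := by
      rw [hr, show -(2 * t) = 2 * (-t) by ring, mul_pow]
    rw [this]; exact C_pow2 n _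
  have hCauchy : ∀ n, C n (g n) (g (n + 1)) := by
    intro n
    have : g (n + 1) = g n + r ^ n := Finset.sum_range_succ _ _
    rw [this]
    have h' := (C.refl n (g n)).add (hrn n)
    rw [add_zero] at h'
    exact h'.symm
  obtain ⟨s, hs⟩ := exists_limit g hCauchy
  refine ⟨s, eq_of_forall_C fun n => ?_⟩
  have h1 : (1 + 2 * t) * g n = 1 - r ^ n := by
    have := geom_sum_mul r n
    calc (1 + 2 * t) * g n = -(g n * (r - 1)) := by rw [hr, hg]; ring
      _ = -(r ^ n - 1) := by rw [this]
      _ = 1 - r ^ n := by ring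
  have h2 : C n ((1 + 2 * t) * s) ((1 + 2 * t) * g n) := (C.refl n _).mul (hs n)
  rw [h1] at h2
  have h3 : C n (1 - r ^ n) (1 - 0) := (C.refl n 1).sub (hrn n)
  have h4 := h2.trans h3
  rwa [sub_zero] at h4

/-- Newton iteration sequence for solving `v + 2v² = w`. -/
def newton (w : 𝕎) : ℕ → 𝕎
  | 0 => w
  | n + 1 => w - 2 * (newton w n) ^ 2

lemma newton_zero (w : 𝕎) : newton w 0 = w := rfl

lemma newton_succ (w : 𝕎) (n : ℕ) : newton w (n + 1) = w - 2 * (newton w n) ^ 2 := rfl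

/-- Solving the equation `v + 2v² = w` in `𝕎` by Newton iteration. -/
lemma exists_AS (w : 𝕎) : ∃ v : 𝕎, v + 2 * v ^ 2 = w := by
  have hstep : ∀ n, C (n + 1) (newton w (n + 1)) (newton w n) := by
    intro n
    induction n with
    | zero =>
        rw [newton_succ, newton_zero]
        have h0 : C 1 (2 * w ^ 2) 0 := (C_zero (w ^ 2) 0).two_zero
        have h' := (C.refl 1 w).sub h0
        rwa [sub_zero] at h'
    | succ m ih =>
        rw [newton_succ w (m + 1), newton_succ w m]
        have hsq : C (m + 2) (2 * (newton w (m + 1)) ^ 2) (2 * (newton w m) ^ 2) := by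
          have h' : C (m + 1) ((newton w (m + 1)) ^ 2) ((newton w m) ^ 2) := by
            rw [pow_two, pow_two]
            exact ih.mul ih
          exact h'.two
        exact (C.refl (m + 2) w).sub hsq
  have hCauchy : ∀ n, C n (newton w n) (newton w (n + 1)) := fun n =>
    ((hstep n).mono (Nat.le_succ n)).symm
  obtain ⟨v, hv⟩ := exists_limit (newton w) hCauchy
  refine ⟨v, eq_of_forall_C fun n => ?_⟩
  have h1 : C n (v + 2 * v ^ 2) (newton w n + 2 * (newton w n) ^ 2) := by
    have hsq : C n (v ^ 2) ((newton w n) ^ 2) := by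
      rw [pow_two, pow_two]
      exact (hv n).mul (hv n)
    exact (hv n).add (hsq.two.mono (Nat.le_succ n))
  have h2 : newton w n + 2 * (newton w n) ^ 2 = w + (newton w n - newton w (n + 1)) := by
    rw [newton_succ]; ring
  have h3 : C n (w + (newton w n - newton w (n + 1))) (w + 0) := by
    refine (C.refl n w).add ?_
    have h' := ((hCauchy n).symm).sub (C.refl n (newton w (n + 1)))
    exact h'.symm.trans (show C n (newton w (n + 1) - newton w (n + 1)) 0 by rw [sub_self]; exact C.refl n 0)
  rw [h2] at h1
  have h5 := h1.trans h3
  rwa [add_zero] at h5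

end WittSquareAux

open WittSquareAux WittVector in
/-- **Lemma 2.11(2), first part.** Let `A` be a perfect commutative ring of characteristic
`2` and `W(A)` its ring of `2`-typical Witt vectors.  For `a ∈ A`, the unit `1 + 4[a]` of
`W(A)` is the square of a unit if and only if `a = c² + c` for some `c ∈ A`, i.e. `a` lies
in the image of the Artin–Schreier map `℘`. -/
theorem one_add_four_teichmuller_square_iff_artinSchreier
    (A : Type u) [CommRing A] [CharP A 2] [PerfectRing A 2] (a : A) :
    (∃ u : (WittVector 2 A)ˣ,
        (u : WittVector 2 A) ^ 2 = 1 + 4 * WittVector.teichmuller 2 a) ↔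
      ∃ c : A, a = c ^ 2 + c := by
  constructor
  · rintro ⟨u, hu⟩
    set x : WittVector 2 A := (u : WittVector 2 A) with hx
    have hchar2 : (2 : A) = 0 := by
      have := CharP.cast_eq_zero A 2; simpa using this
    have h0 : φ x ^ 2 = 1 := by
      have h := congrArg φ hu
      rw [map_pow, map_add, map_one, map_mul, map_ofNat,
        φ_apply (WittVector.teichmuller 2 a), teichmuller_coeff_zero] at h
      rw [h]
      linear_combination 2 * a * hchar2
    have h1 : φ x + 1 = 0 := by
      apply sq_inj
      rw [zero_pow (by norm_num)]
      linear_combination h0 + (φ x + 1) * hchar2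
    have hcoeff : (x - 1).coeff 0 = 0 := by
      rw [← φ_apply, map_sub, map_one]
      linear_combination h1 - hchar2
    obtain ⟨v, hvx⟩ := exists_half hcoeff
    have hx2 : x = 1 + 2 * v := by linear_combination hvx
    have h6 : 2 * (2 * (v + v ^ 2)) = 2 * (2 * WittVector.teichmuller 2 a) := by
      linear_combination hu - (x + 1 + 2 * v) * hx2
    have h7 : v + v ^ 2 = WittVector.teichmuller 2 a :=
      two_cancel (two_cancel h6)
    refine ⟨φ v, ?_⟩
    have h8 := congrArg φ h7
    rw [map_add, map_pow, φ_apply (WittVector.teichmuller 2 a),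
      teichmuller_coeff_zero] at h8
    linear_combination -h8
  · rintro ⟨c, hc⟩
    set t : WittVector 2 A := WittVector.teichmuller 2 c with ht
    set Ta : WittVector 2 A := WittVector.teichmuller 2 a with hTa
    have hd0 : (t + t * t - Ta).coeff 0 = 0 := by
      rw [← φ_apply]
      simp only [map_sub, map_add, map_mul, ht, hTa, φ_apply, teichmuller_coeff_zero]
      linear_combination -hc
    obtain ⟨z, hz⟩ := exists_half hd0
    have hsq1 : (1 + 2 * t) ^ 2 = 1 + 4 * Ta + 8 * z := by linear_combination 4 * hz
    obtain ⟨s₁, hs₁⟩ := exists_inv t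
    obtain ⟨v, hv⟩ := exists_AS (-(z * s₁ ^ 2))
    obtain ⟨s₂, hs₂⟩ := exists_inv (2 * v)
    have huinv : ((1 + 2 * t) * (1 + 4 * v)) * (s₁ * s₂) = 1 := by
      have h' : ((1 + 2 * t) * (1 + 4 * v)) * (s₁ * s₂) =
          ((1 + 2 * t) * s₁) * ((1 + 2 * (2 * v)) * s₂) := by ring
      rw [h', hs₁, hs₂, one_mul]
    have husq : ((1 + 2 * t) * (1 + 4 * v)) ^ 2 = 1 + 4 * Ta := by
      linear_combination ((1 + 4 * v) ^ 2 - 8 * z * s₁ ^ 2 + 16 * z * s₁ ^ 2) * hsq1 +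
        8 * (1 + 4 * Ta + 8 * z) * hv +
        (8 * z * ((1 + 2 * t) * s₁ + 1) - 16 * z * ((1 + 2 * t) * s₁ + 1)) * hs₁
    exact ⟨Units.mkOfMulEqOne _ _ huinv, husq⟩
end
end

section
/- Let A be a perfect commutative ring of characteristic 2 and W(A) its ring of 2-typical Witt vectors. Then every unit α ∈ W(A)ˣ can be written in the form α = β²·(1 + 2[a] + 4[b]) with β ∈ W(A)ˣ and a, b ∈ A. (Structure of W(A)ˣ modulo squares, established in the proof of Lemma 2.11(2): combined with the injectivity of a ↦ 1+4[a], this gives the exact sequence 0 → A/℘(A) → W(A)ˣ/(W(A)ˣ)² → A → 0.) -/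
namespace WittAux
open WittVector

variable {A : Type*} [CommRing A] [CharP A 2] [PerfectRing A 2]

local notation "𝕎" => WittVector 2





lemma exists_two_mul (x : 𝕎 A) (h : x.coeff 0 = 0) : ∃ y, x = 2 * y := by
  refine ⟨(frobeniusEquiv 2 A).symm (WittVector.mk 2 fun n => x.coeff (n+1)), ?_⟩
  have h2 : (2 : 𝕎 A) = ((2 : ℕ) : 𝕎 A) := by norm_num
  rw [h2, mul_comm, ← verschiebung_frobenius]
  have : WittVector.frobenius ((frobeniusEquiv 2 A).symm (WittVector.mk 2 fun n => x.coeff (n+1)))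
      = WittVector.mk 2 fun n => x.coeff (n+1) := by
    simpa using (frobeniusEquiv 2 A).apply_symm_apply (WittVector.mk 2 fun n => x.coeff (n+1))
  rw [this]
  ext n
  cases n with
  | zero => simpa [verschiebung_coeff_zero] using h
  | succ n => simp [verschiebung_coeff_succ, WittVector.mk]





omit [PerfectRing A 2] in
lemma iterate_verschiebung_coeff_eq_zero (z : 𝕎 A) {n i : ℕ} (h : i < n) :
    (verschiebung^[n] z).coeff i = 0 := by
  induction n generalizing i with
  | zero => omega
  | succ n ih =>
    rw [Function.iterate_succ_apply']
    cases i with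
    | zero => exact verschiebung_coeff_zero _
    | succ i => rw [verschiebung_coeff_succ]; exact ih (by omega)

omit [PerfectRing A 2] in
lemma pow_two_mul_eq_iterate (n : ℕ) (y : 𝕎 A) :
    2 ^ n * y = verschiebung^[n] (WittVector.frobenius^[n] y) := by
  induction n generalizing y with
  | zero => simp
  | succ n ih =>
    have hc := (verschiebung_frobenius_comm (p := 2) (R := A)).iterate_left n
        (WittVector.frobenius^[n] y)
    have hvf := verschiebung_frobenius (p := 2) (verschiebung^[n] (WittVector.frobenius^[n] y))
    calc 2 ^ (n+1) * y = 2 * (2 ^ n * y) := by ring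
    _ = 2 * verschiebung^[n] (WittVector.frobenius^[n] y) := by rw [ih]
    _ = verschiebung^[n] (WittVector.frobenius^[n] y) * ((2 : ℕ) : 𝕎 A) := by
        push_cast; ring
    _ = verschiebung (WittVector.frobenius (verschiebung^[n] (WittVector.frobenius^[n] y))) := by
        rw [hvf]
    _ = verschiebung (verschiebung^[n] (WittVector.frobenius (WittVector.frobenius^[n] y))) := by
        rw [hc]
    _ = _ := by
        rw [← Function.iterate_succ_apply' verschiebung,
          ← Function.iterate_succ_apply' WittVector.frobenius]

omit [PerfectRing A 2] in
lemma coeff_pow_two_mul_eq_zero (y : 𝕎 A) {n i : ℕ} (h : i < n) :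
    (2 ^ n * y).coeff i = 0 := by
  rw [pow_two_mul_eq_iterate]; exact iterate_verschiebung_coeff_eq_zero _ h

lemma frobenius_iterate_symm (n : ℕ) (z : 𝕎 A) :
    WittVector.frobenius^[n] ((⇑(frobeniusEquiv 2 A).symm)^[n] z) = z := by
  induction n generalizing z with
  | zero => simp
  | succ n ih =>
    rw [Function.iterate_succ_apply WittVector.frobenius,
      Function.iterate_succ_apply' (⇑(frobeniusEquiv 2 A).symm)]
    have key : ∀ w : 𝕎 A, WittVector.frobenius ((frobeniusEquiv 2 A).symm w) = w := fun w => by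
      simpa using (frobeniusEquiv 2 A).apply_symm_apply w
    rw [key, ih]

lemma exists_pow_two_mul (x : 𝕎 A) (n : ℕ) (h : ∀ i < n, x.coeff i = 0) :
    ∃ y, x = 2 ^ n * y := by
  refine ⟨(⇑(frobeniusEquiv 2 A).symm)^[n] (WittVector.mk 2 fun i => x.coeff (i + n)), ?_⟩
  rw [pow_two_mul_eq_iterate, frobenius_iterate_symm]
  ext j
  rcases lt_or_ge j n with hj | hj
  · rw [h j hj, iterate_verschiebung_coeff_eq_zero _ hj]
  · obtain ⟨k, rfl⟩ : ∃ k, j = k + n := ⟨j - n, by omega⟩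
    rw [iterate_verschiebung_coeff (p := 2)]
    rfl





omit [CharP A 2] [PerfectRing A 2] in
lemma init_coeff (x : 𝕎 A) (n i : ℕ) :
    (init n x).coeff i = if i < n then x.coeff i else 0 := by
  simp only [init, select, WittVector.mk]
  split_ifs <;> rfl

omit [CharP A 2] [PerfectRing A 2] in
lemma init_zero (n : ℕ) : init n (0 : 𝕎 A) = 0 := by
  ext i; rw [init_coeff]; simp

omit [CharP A 2] [PerfectRing A 2] in
lemma init_eq_zero_of_coeff (z : 𝕎 A) (n : ℕ) (hz : ∀ i < n, z.coeff i = 0) :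
    init n z = 0 := by
  ext i; rw [init_coeff]
  split_ifs with hi
  · simp [hz i hi]
  · simp

omit [CharP A 2] [PerfectRing A 2] in
lemma sub_coeff_eq_zero (x y : 𝕎 A) (n : ℕ) (h : ∀ i < n, x.coeff i = y.coeff i)
    {i : ℕ} (hi : i < n) : (x - y).coeff i = 0 := by
  have hxy : init n x = init n y := by
    ext j; rw [init_coeff, init_coeff]
    split_ifs with hj
    · exact h j hj
    · rfl
  have : init n (x - y) = 0 := by
    rw [init_sub, hxy, sub_self, init_zero]
  calc (x - y).coeff i = (init n (x - y)).coeff i := by rw [init_coeff, if_pos hi]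
  _ = 0 := by rw [this]; simp

omit [CharP A 2] [PerfectRing A 2] in
lemma add_coeff_of_coeff_eq_zero (x z : 𝕎 A) (n : ℕ) (hz : ∀ i < n, z.coeff i = 0)
    {i : ℕ} (hi : i < n) : (x + z).coeff i = x.coeff i := by
  have : init n (x + z) = init n x := by
    rw [init_add, init_eq_zero_of_coeff z n hz, add_zero, init_init]
  calc (x + z).coeff i = (init n (x + z)).coeff i := by rw [init_coeff, if_pos hi]
  _ = (init n x).coeff i := by rw [this]
  _ = x.coeff i := by rw [init_coeff, if_pos hi]


lemma step (u s v d : 𝕎 A) (hs : s.coeff 0 = 1) (hv : v.coeff 0 = 1) (k : ℕ)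
    (hd : u = v ^ 2 * s + 2 ^ (k + 3) * d) :
    (v + 2 ^ (k + 2) * d).coeff 0 = 1 ∧
      ∃ d', u = (v + 2 ^ (k + 2) * d) ^ 2 * s + 2 ^ (k + 1 + 3) * d' := by
  have h1 : (1 - v * s).coeff 0 = 0 := by
    have h := WittVector.constantCoeff_apply (p := 2) (1 - v * s)
    simp only [map_sub, map_mul, map_one, WittVector.constantCoeff_apply] at h ⊢
    rw [hv, hs] at *
    simpa using h ▸ (by ring : (1 : A) - 1 * 1 = 0)
  obtain ⟨t, ht⟩ := exists_two_mul _ h1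
  constructor
  · rw [add_coeff_of_coeff_eq_zero v _ (k + 2)
      (fun i hi => coeff_pow_two_mul_eq_zero _ hi) (by omega), hv]
  · exact ⟨d * t - 2 ^ k * (d ^ 2 * s), by linear_combination hd + (2 ^ (k + 3) * d) * ht⟩

noncomputable def seq (u s w : 𝕎 A) (hs : s.coeff 0 = 1) (hu : u = s + 2 ^ 3 * w) :
    (k : ℕ) → {v : 𝕎 A // v.coeff 0 = 1 ∧ ∃ d, u = v ^ 2 * s + 2 ^ (k + 3) * d}
  | 0 => ⟨1, by simp, w, by rw [hu]; ring⟩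
  | k + 1 =>
    let p := seq u s w hs hu k
    ⟨p.1 + 2 ^ (k + 2) * (p.2.2).choose,
      step u s p.1 (p.2.2).choose hs p.2.1 k (p.2.2).choose_spec⟩

lemma seq_succ (u s w : 𝕎 A) (hs : s.coeff 0 = 1) (hu : u = s + 2 ^ 3 * w) (k : ℕ) :
    (seq u s w hs hu (k + 1)).1 =
      (seq u s w hs hu k).1 + 2 ^ (k + 2) * ((seq u s w hs hu k).2.2).choose := by
  rw [seq]

lemma exists_sq (u s w : 𝕎 A) (hs : s.coeff 0 = 1) (hu : u = s + 2 ^ 3 * w) :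
    ∃ v : 𝕎 A, v.coeff 0 = 1 ∧ u = v ^ 2 * s := by
  set g : (k : ℕ) → {v : 𝕎 A // v.coeff 0 = 1 ∧ ∃ d, u = v ^ 2 * s + 2 ^ (k + 3) * d} :=
    seq u s w hs hu with hg
  set v : 𝕎 A := WittVector.mk 2 (fun j => (g j).1.coeff j) with hvdef
  have hveq : ∀ j, v.coeff j = (g j).1.coeff j := fun j => rfl
  have hstab : ∀ k, ∀ j ≤ k, (g k).1.coeff j = (g j).1.coeff j := by
    intro k
    induction k with
    | zero => intro j hj; rcases Nat.le_zero.mp hj with rfl; rfl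
    | succ k ih =>
      intro j hj
      have hgs : (g (k + 1)).1 = (g k).1 + 2 ^ (k + 2) * ((g k).2.2).choose :=
        seq_succ u s w hs hu k
      rw [hgs, add_coeff_of_coeff_eq_zero _ _ (k + 2)
        (fun i hi => coeff_pow_two_mul_eq_zero _ hi) (by omega : j < k + 2)]
      by_cases hjk : j ≤ k
      · exact ih j hjk
      · have hj1 : j = k + 1 := by omega
        subst hj1
        rw [hgs, add_coeff_of_coeff_eq_zero _ _ (k + 2)
          (fun i hi => coeff_pow_two_mul_eq_zero _ hi) (by omega : k + 1 < k + 2)]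
  have hdiff : ∀ k, ∃ y, v - (g k).1 = 2 ^ (k + 1) * y := by
    intro k
    refine exists_pow_two_mul _ _ (fun i hi => sub_coeff_eq_zero _ _ (k + 1) ?_ hi)
    intro j hj
    rw [hveq j, hstab k j (by omega)]
  have hzero : ∀ i, (u - v ^ 2 * s).coeff i = 0 := by
    intro i
    obtain ⟨d, hd⟩ := (g (i + 1)).2.2
    obtain ⟨y, hy⟩ := hdiff (i + 1)
    have key : u - v ^ 2 * s = 2 ^ (i + 2) * (4 * d - y * (v + (g (i + 1)).1) * s) := by
      linear_combination hd - ((v + (g (i + 1)).1) * s) * hy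
    rw [key]
    exact coeff_pow_two_mul_eq_zero _ (by omega : i < i + 2)
  refine ⟨v, ?_, ?_⟩
  · rw [hveq 0]; exact (g 0).2.1
  · have : u - v ^ 2 * s = 0 := by
      ext i; rw [hzero i]; simp
    linear_combination this

end WittAux

universe u

/-- **Lemma 2.11(2), second part.** Let `A` be a perfect commutative ring of characteristic
`2` and `W(A)` its ring of `2`-typical Witt vectors.  Then every unit `α` of `W(A)` can be
written as `α = β² · (1 + 2[a] + 4[b])` with `β` a unit of `W(A)` and `a, b ∈ A`. -/
theorem unit_eq_square_mul_one_add_teichmuller_wittVector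
    (A : Type u) [CommRing A] [CharP A 2] [PerfectRing A 2]
    (α : (WittVector 2 A)ˣ) :
    ∃ (β : (WittVector 2 A)ˣ) (a b : A),
      (α : WittVector 2 A) =
        (β : WittVector 2 A) ^ 2 *
          (1 + 2 * WittVector.teichmuller 2 a + 4 * WittVector.teichmuller 2 b) := by
  classical
  obtain ⟨c, hc⟩ : ∃ c : A, c ^ 2 = WittVector.constantCoeff (α : WittVector 2 A) := by
    obtain ⟨c, hc⟩ := (bijective_frobenius A 2).2 (WittVector.constantCoeff (α : WittVector 2 A))
    exact ⟨c, by rwa [frobenius_def] at hc⟩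
  have ha0 : WittVector.constantCoeff (α : WittVector 2 A) *
      WittVector.constantCoeff ((α⁻¹ : (WittVector 2 A)ˣ) : WittVector 2 A) = 1 := by
    rw [← map_mul, Units.mul_inv, map_one]
  set a0' : A := WittVector.constantCoeff ((α⁻¹ : (WittVector 2 A)ˣ) : WittVector 2 A) with ha0'
  have htc : WittVector.teichmuller 2 c * WittVector.teichmuller 2 (c * a0') = 1 := by
    rw [← map_mul]
    have : c * (c * a0') = 1 := by
      have h1 : c * (c * a0') = c ^ 2 * a0' := by ring
      rw [h1, hc, ha0]
    rw [this, map_one]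
  -- the normalized unit u
  set u : WittVector 2 A := WittVector.teichmuller 2 (c * a0') ^ 2 * (α : WittVector 2 A)
    with hudef
  have hu0 : u.coeff 0 = 1 := by
    have : WittVector.constantCoeff u = 1 := by
      rw [hudef, map_mul, map_pow]
      simp only [WittVector.constantCoeff_apply, WittVector.teichmuller_coeff_zero]
      have hc0 := hc
      have ha1 := ha0
      simp only [WittVector.constantCoeff_apply, ha0'] at hc0 ha1 ⊢
      linear_combination (((α⁻¹ : (WittVector 2 A)ˣ) : WittVector 2 A).coeff 0 ^ 2 * ((α : WittVector 2 A)).coeff 0) * hc0 +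
        (((α : WittVector 2 A)).coeff 0 * ((α⁻¹ : (WittVector 2 A)ˣ) : WittVector 2 A).coeff 0 + 1) * ha1
    simpa [WittVector.constantCoeff_apply] using this
  obtain ⟨z, hz⟩ := WittAux.exists_two_mul (u - 1) (by
    have : WittVector.constantCoeff (u - 1) = 0 := by
      rw [map_sub, map_one]
      simp [WittVector.constantCoeff_apply, hu0]
    simpa [WittVector.constantCoeff_apply] using this)
  obtain ⟨w, hw⟩ := WittAux.exists_two_mul (z - WittVector.teichmuller 2 (z.coeff 0)) (by
    have : WittVector.constantCoeff (z - WittVector.teichmuller 2 (z.coeff 0)) = 0 := by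
      rw [map_sub]; simp only [WittVector.constantCoeff_apply, WittVector.teichmuller_coeff_zero]
      simp [WittVector.constantCoeff_apply]
    simpa [WittVector.constantCoeff_apply] using this)
  obtain ⟨w', hw'⟩ := WittAux.exists_two_mul (w - WittVector.teichmuller 2 (w.coeff 0)) (by
    have : WittVector.constantCoeff (w - WittVector.teichmuller 2 (w.coeff 0)) = 0 := by
      rw [map_sub]; simp only [WittVector.constantCoeff_apply, WittVector.teichmuller_coeff_zero]
      simp [WittVector.constantCoeff_apply]
    simpa [WittVector.constantCoeff_apply] using this)
  have hs0 : (1 + 2 * WittVector.teichmuller 2 (z.coeff 0) +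
      4 * WittVector.teichmuller 2 (w.coeff 0)).coeff 0 = 1 := by
    have h2 : ((2 : WittVector 2 A) * WittVector.teichmuller 2 (z.coeff 0)).coeff 0 = 0 := by
      have := WittAux.coeff_pow_two_mul_eq_zero (A := A)
        (WittVector.teichmuller 2 (z.coeff 0)) (n := 1) (i := 0) (by omega)
      simpa using this
    have h4 : ((4 : WittVector 2 A) * WittVector.teichmuller 2 (w.coeff 0)).coeff 0 = 0 := by
      have := WittAux.coeff_pow_two_mul_eq_zero (A := A)
        (WittVector.teichmuller 2 (w.coeff 0)) (n := 2) (i := 0) (by omega)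
      simpa [show ((2:WittVector 2 A))^2 = 4 by norm_num] using this
    have := congrArg₂ (· + ·)
      (congrArg₂ (· + ·) (WittVector.one_coeff_zero (p := 2) (R := A)) h2) h4
    calc (1 + 2 * WittVector.teichmuller 2 (z.coeff 0) +
          4 * WittVector.teichmuller 2 (w.coeff 0)).coeff 0
        = WittVector.constantCoeff (1 + 2 * WittVector.teichmuller 2 (z.coeff 0) +
          4 * WittVector.teichmuller 2 (w.coeff 0)) := by
          simp [WittVector.constantCoeff_apply]
      _ = 1 := by
          rw [map_add, map_add, map_one]
          simp only [WittVector.constantCoeff_apply, h2, h4]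
          ring
  have hus : u = (1 + 2 * WittVector.teichmuller 2 (z.coeff 0) +
      4 * WittVector.teichmuller 2 (w.coeff 0)) + 2 ^ 3 * w' := by
    linear_combination hz + 2 * hw + 4 * hw'
  obtain ⟨v, hv0, hveq⟩ := WittAux.exists_sq u _ w' hs0 hus
  have hαu : (WittVector.teichmuller 2 c) ^ 2 * u = (α : WittVector 2 A) := by
    rw [hudef]
    linear_combination ((WittVector.teichmuller 2 c * WittVector.teichmuller 2 (c * a0') + 1) *
      (α : WittVector 2 A)) * htc
  refine ⟨Units.mkOfMulEqOne (WittVector.teichmuller 2 c * v)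
      (v * (1 + 2 * WittVector.teichmuller 2 (z.coeff 0) +
        4 * WittVector.teichmuller 2 (w.coeff 0)) * WittVector.teichmuller 2 c *
        ((α⁻¹ : (WittVector 2 A)ˣ) : WittVector 2 A)) ?_, z.coeff 0, w.coeff 0, ?_⟩
  · have h1 : ((α : WittVector 2 A) * ((α⁻¹ : (WittVector 2 A)ˣ) : WittVector 2 A)) = 1 :=
      α.mul_inv
    calc WittVector.teichmuller 2 c * v *
          (v * (1 + 2 * WittVector.teichmuller 2 (z.coeff 0) +
            4 * WittVector.teichmuller 2 (w.coeff 0)) * WittVector.teichmuller 2 c *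
            ((α⁻¹ : (WittVector 2 A)ˣ) : WittVector 2 A))
        = (WittVector.teichmuller 2 c) ^ 2 * (v ^ 2 * (1 + 2 * WittVector.teichmuller 2 (z.coeff 0) +
            4 * WittVector.teichmuller 2 (w.coeff 0))) *
            ((α⁻¹ : (WittVector 2 A)ˣ) : WittVector 2 A) := by ring
      _ = (WittVector.teichmuller 2 c) ^ 2 * u * ((α⁻¹ : (WittVector 2 A)ˣ) : WittVector 2 A) := by
          rw [← hveq]
      _ = (α : WittVector 2 A) * ((α⁻¹ : (WittVector 2 A)ˣ) : WittVector 2 A) := by rw [hαu]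
      _ = 1 := h1
  · rw [Units.val_mkOfMulEqOne]
    calc (α : WittVector 2 A) = (WittVector.teichmuller 2 c) ^ 2 * u := hαu.symm
      _ = (WittVector.teichmuller 2 c) ^ 2 * (v ^ 2 * (1 + 2 * WittVector.teichmuller 2 (z.coeff 0) +
            4 * WittVector.teichmuller 2 (w.coeff 0))) := by rw [← hveq]
      _ = (WittVector.teichmuller 2 c * v) ^ 2 * (1 + 2 * WittVector.teichmuller 2 (z.coeff 0) +
            4 * WittVector.teichmuller 2 (w.coeff 0)) := by ring
end

section
/- Let A be a perfect commutative ring of characteristic 2 and W(A) its ring of 2-typical Witt vectors. Then the quotient map W(A) → W(A)/8W(A) induces a bijection W(A)ˣ/(W(A)ˣ)² → (W(A)/8W(A))ˣ/((W(A)/8W(A))ˣ)² of unit groups modulo squares. (Used in the proof of Lemma 2.12(1); W(A)/8W(A) is the ring W₃(A) of Witt vectors of length 3.) -/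
universe u

open WittVector Polynomial

namespace WittVectorModEightAux

variable {p : ℕ} [hp : Fact p.Prime] {A : Type u} [CommRing A] [CharP A p] [PerfectRing A p]

lemma coeff_mul_pow_eq_zero (n : ℕ) (x : WittVector p A) :
    ∀ i < n, (x * (p : WittVector p A) ^ n).coeff i = 0 := by
  induction n generalizing x with
  | zero => intro i hi; omega
  | succ n ih =>
    intro i hi
    rw [pow_succ, ← mul_assoc]
    match i with
    | 0 => exact WittVector.mul_charP_coeff_zero _
    | Nat.succ j =>
      rw [WittVector.mul_charP_coeff_succ, ih x j (by omega), zero_pow hp.out.ne_zero]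

lemma pow_dvd_of_coeff_eq_zero (n : ℕ) (x : WittVector p A)
    (h : ∀ i < n, x.coeff i = 0) : (p : WittVector p A) ^ n ∣ x := by
  induction n generalizing x with
  | zero => simpa using one_dvd x
  | succ n ih =>
    set y : WittVector p A := WittVector.mk p fun i => x.coeff (i + 1) with hy
    have hxy : x = WittVector.verschiebung y := by
      ext i
      match i with
      | 0 =>
        rw [WittVector.verschiebung_coeff_zero]
        exact h 0 n.succ_pos
      | Nat.succ j =>
        rw [WittVector.verschiebung_coeff_succ]
        simp [hy, WittVector.coeff_mk]
    obtain ⟨z, hz⟩ := ih y fun i hi => by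
      simpa [hy, WittVector.coeff_mk] using h (i + 1) (by omega)
    refine ⟨(frobeniusEquiv p A).symm z, ?_⟩
    have hw : WittVector.frobenius ((frobeniusEquiv p A).symm y) = y :=
      (frobeniusEquiv p A).apply_symm_apply y
    calc x = WittVector.verschiebung (WittVector.frobenius ((frobeniusEquiv p A).symm y)) := by
            rw [hw, hxy]
      _ = (frobeniusEquiv p A).symm y * p := WittVector.verschiebung_frobenius _
      _ = (p : WittVector p A) ^ (n + 1) * (frobeniusEquiv p A).symm z := by
            rw [hz, map_mul, map_pow, map_natCast]
            ring

lemma span_pow_eq_ker_truncate (n : ℕ) :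
    Ideal.span {(p : WittVector p A) ^ n} =
      RingHom.ker (WittVector.truncate (p := p) (R := A) n) := by
  ext x
  rw [Ideal.mem_span_singleton, WittVector.mem_ker_truncate]
  constructor
  · rintro ⟨y, rfl⟩ i hi
    rw [mul_comm]
    exact coeff_mul_pow_eq_zero n y i hi
  · intro h
    exact pow_dvd_of_coeff_eq_zero n x h

lemma isAdicComplete_span_p :
    IsAdicComplete (Ideal.span {(p : WittVector p A)}) (WittVector p A) := by
  refine { toIsHausdorff := ⟨?_⟩, toIsPrecomplete := ⟨?_⟩ }
  · intro x hx
    ext i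
    have := hx (i + 1)
    rw [SModEq.zero, ← Ideal.one_eq_top, smul_eq_mul, mul_one, Ideal.span_singleton_pow,
      span_pow_eq_ker_truncate, WittVector.mem_ker_truncate] at this
    simpa using this i (by omega)
  · intro f hf
    have key : ∀ m n : ℕ, m ≤ n →
        WittVector.truncate (p := p) (R := A) m (f m) = WittVector.truncate m (f n) := by
      intro m n h
      have := hf h
      rw [SModEq.sub_mem, ← Ideal.one_eq_top, smul_eq_mul, mul_one, Ideal.span_singleton_pow,
        span_pow_eq_ker_truncate, RingHom.mem_ker, map_sub, sub_eq_zero] at this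
      exact this
    refine ⟨WittVector.mk p fun i => (f (i + 1)).coeff i, fun n => ?_⟩
    rw [SModEq.sub_mem, ← Ideal.one_eq_top, smul_eq_mul, mul_one, Ideal.span_singleton_pow,
      span_pow_eq_ker_truncate, RingHom.mem_ker, map_sub, sub_eq_zero]
    apply TruncatedWittVector.ext
    intro i
    rw [WittVector.coeff_truncate, WittVector.coeff_truncate, WittVector.coeff_mk]
    have h2 := congrArg (fun z => TruncatedWittVector.coeff ⟨(i : ℕ), Nat.lt_succ_self _⟩ z)
      (key ((i : ℕ) + 1) n i.2)
    simpa [WittVector.coeff_truncate] using h2.symm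

end WittVectorModEightAux

open WittVectorModEightAux

/-- **Used in the proof of Lemma 2.12(1).** Let `A` be a perfect commutative ring of
characteristic `2` and `W(A)` its ring of `2`-typical Witt vectors.  Then the quotient map
`W(A) → W(A)/8W(A)` induces a bijection on unit groups modulo squares
`W(A)ˣ/(W(A)ˣ)² ≅ (W(A)/8W(A))ˣ/((W(A)/8W(A))ˣ)²`, stated elementwise: two units of
`W(A)` differ by a square if and only if their images do, and every unit of `W(A)/8W(A)`
is, up to a square, the image of a unit of `W(A)`. -/
theorem units_mod_squares_bijective_wittVector_mod_eight
    (A : Type u) [CommRing A] [CharP A 2] [PerfectRing A 2] :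
    (∀ u v : (WittVector 2 A)ˣ,
      (∃ w : (WittVector 2 A ⧸ Ideal.span {(8 : WittVector 2 A)})ˣ,
          Units.map (Ideal.Quotient.mk (Ideal.span {(8 : WittVector 2 A)})).toMonoidHom u =
            w ^ 2 *
              Units.map (Ideal.Quotient.mk (Ideal.span {(8 : WittVector 2 A)})).toMonoidHom v) ↔
        ∃ w : (WittVector 2 A)ˣ, u = w ^ 2 * v) ∧
    (∀ q : (WittVector 2 A ⧸ Ideal.span {(8 : WittVector 2 A)})ˣ,
      ∃ (w : (WittVector 2 A ⧸ Ideal.span {(8 : WittVector 2 A)})ˣ)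
        (u : (WittVector 2 A)ˣ),
        q = w ^ 2 *
          Units.map (Ideal.Quotient.mk (Ideal.span {(8 : WittVector 2 A)})).toMonoidHom u) := by
  haveI : Fact (Nat.Prime 2) := ⟨Nat.prime_two⟩
  set J : Ideal (WittVector 2 A) := Ideal.span {(8 : WittVector 2 A)} with hJdef
  haveI hAC : IsAdicComplete (Ideal.span {(2 : WittVector 2 A)}) (WittVector 2 A) := by
    have h := isAdicComplete_span_p (p := 2) (A := A)
    simpa using h
  have hJle : J ≤ Ideal.jacobson ⊥ := by
    refine le_trans ?_ (IsAdicComplete.le_jacobson_bot (Ideal.span {(2 : WittVector 2 A)}))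
    rw [hJdef, Ideal.span_singleton_le_span_singleton]
    exact ⟨4, by norm_num⟩
  haveI : IsLocalHom (Ideal.Quotient.mk J) := isLocalHom_of_le_jacobson_bot _ hJle
  -- every unit of the quotient lifts to a unit
  have lift_unit : ∀ q : (WittVector 2 A ⧸ J)ˣ, ∃ u : (WittVector 2 A)ˣ,
      Units.map (Ideal.Quotient.mk J).toMonoidHom u = q := by
    intro q
    obtain ⟨a, ha⟩ := Ideal.Quotient.mk_surjective (q : WittVector 2 A ⧸ J)
    have haU : IsUnit a := by
      apply IsUnit.of_map (Ideal.Quotient.mk J)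
      rw [ha]
      exact q.isUnit
    obtain ⟨u, rfl⟩ := haU
    exact ⟨u, Units.ext (by simpa using ha)⟩
  -- elements of 1 + J are squares
  have sqrt : ∀ c ∈ J, ∃ s : WittVector 2 A, (1 + 2 * s) ^ 2 = 1 + c := by
    intro c hc
    rw [hJdef, Ideal.mem_span_singleton] at hc
    obtain ⟨t, rfl⟩ := hc
    obtain ⟨a, ha, -⟩ := HenselianRing.is_henselian
      (R := WittVector 2 A) (I := Ideal.span {(2 : WittVector 2 A)})
      (X ^ 2 + X - C (2 * t)) (by monicity!) 0
      (by
        simp only [eval_sub, eval_add, eval_pow, eval_X, eval_C]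
        rw [Ideal.mem_span_singleton]
        exact ⟨-t, by ring⟩)
      (by
        simp only [derivative_sub, derivative_add, derivative_pow, derivative_X, derivative_C,
          eval_sub, eval_add, eval_mul, eval_pow, eval_X, eval_C]
        simp)
    have ha' : a ^ 2 + a - 2 * t = 0 := by
      simpa using ha
    exact ⟨a, by linear_combination (4 : WittVector 2 A) * ha'⟩
  constructor
  · intro u v
    constructor
    · rintro ⟨w, hw⟩
      obtain ⟨x, hx⟩ := lift_unit w
      set z : (WittVector 2 A)ˣ := u * v⁻¹ * (x⁻¹) ^ 2 with hzdef
      have hz1 : Ideal.Quotient.mk J ((z : WittVector 2 A)) = Ideal.Quotient.mk J 1 := by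
        have : Units.map (Ideal.Quotient.mk J).toMonoidHom z = 1 := by
          rw [hzdef, map_mul, map_mul, map_pow, map_inv, map_inv, hx, hw]
          group
        have := congrArg (Units.val) this
        simpa using this
      have hmem : (z : WittVector 2 A) - 1 ∈ J := (Ideal.Quotient.eq).mp hz1
      obtain ⟨s, hs⟩ := sqrt _ hmem
      rw [add_sub_cancel] at hs
      have hu : IsUnit (1 + 2 * s) := by
        have : IsUnit ((1 + 2 * s) * (1 + 2 * s)) := by
          rw [← sq, hs]
          exact z.isUnit
        exact isUnit_of_mul_isUnit_left this
      obtain ⟨y, hy⟩ := hu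
      have hy2 : y ^ 2 = z := Units.ext (by
        push_cast
        rw [hy, hs])
      refine ⟨y * x, ?_⟩
      have : (y * x) ^ 2 * v = (z * x ^ 2) * v := by rw [mul_pow, hy2]
      rw [this, hzdef]
      group
    · rintro ⟨w, rfl⟩
      exact ⟨Units.map (Ideal.Quotient.mk J).toMonoidHom w, by rw [map_mul, map_pow]⟩
  · intro q
    obtain ⟨u, hu⟩ := lift_unit q
    exact ⟨1, u, by rw [one_pow, one_mul, hu]⟩
end

section
/- Let F be a field of characteristic different from 2, E/F a finite Galois extension, L an intermediate field of E/F, and x ∈ L a primitive element (F(x) = L) with m = [L : F]. Let τ_1, …, τ_m be an enumeration of the F-algebra homomorphisms L → E (there are exactly m of them) and set δ = ∏_{i<j} (τ_i(x) − τ_j(x)) ∈ E, which is nonzero. Each σ ∈ Gal(E/F) induces a permutation π_σ of {1,…,m} via σ ∘ τ_i = τ_{π_σ(i)}. Then σ(δ) = sign(π_σ)·δ for every σ ∈ Gal(E/F), and δ² equals the discriminant of the power basis (1, x, …, x^{m−1}) of L over F (the determinant of the Gram matrix of the trace form Tr_{L/F}(ab) in this basis). (Lemma 5.6: the character δ_{L/F}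 — the determinant of the induced representation of the trivial representation, i.e. the sign of the Galois permutation action on embeddings — is the quadratic character of the square root of the discriminant of the trace form of L/F.) -/
open Finset

private lemma prod_Ioi_fin_cast {M : Type*} [CommMonoid M] {a b : ℕ} (h : b = a)
    (f : Fin a → Fin a → M) :
    (∏ i : Fin b, ∏ j ∈ Finset.Ioi i, f (Fin.cast h i) (Fin.cast h j)) =
      ∏ i : Fin a, ∏ j ∈ Finset.Ioi i, f i j := by
  subst h
  rfl

private lemma det_fin_cast {R : Type*} [CommRing R] {a b : ℕ} (h : b = a)
    (f : Fin a → Fin a → R) :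
    Matrix.det (Matrix.of fun i j : Fin b => f (Fin.cast h i) (Fin.cast h j)) =
      Matrix.det (Matrix.of f) := by
  subst h
  rfl

private lemma prod_sub_comp_perm {R : Type*} [CommRing R] {n : ℕ} (f : Fin n → R)
    (π : Equiv.Perm (Fin n)) :
    (∏ i : Fin n, ∏ j ∈ Finset.Ioi i, (f (π i) - f (π j))) =
      (Equiv.Perm.sign π : ℤ) • ∏ i : Fin n, ∏ j ∈ Finset.Ioi i, (f i - f j) := by
  have key : ∀ g : Fin n → R,
      (∏ i : Fin n, ∏ j ∈ Finset.Ioi i, (g i - g j)) =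
        (∏ i : Fin n, (-1 : R) ^ (Finset.Ioi i).card) * (Matrix.vandermonde g).det := by
    intro g
    rw [Matrix.det_vandermonde, ← Finset.prod_mul_distrib]
    refine Finset.prod_congr rfl fun i _ => ?_
    rw [← Finset.prod_const, ← Finset.prod_mul_distrib]
    exact Finset.prod_congr rfl fun j _ => by ring
  have hsub : Matrix.vandermonde (f ∘ π) = (Matrix.vandermonde f).submatrix π id := by
    ext i j
    simp [Matrix.vandermonde]
  have hperm : (Matrix.vandermonde (f ∘ π)).det =
      (Equiv.Perm.sign π : ℤ) • (Matrix.vandermonde f).det := by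
    rw [hsub, Matrix.det_permute, zsmul_eq_mul]
  calc (∏ i : Fin n, ∏ j ∈ Finset.Ioi i, (f (π i) - f (π j)))
      = (∏ i : Fin n, (-1 : R) ^ (Finset.Ioi i).card) * (Matrix.vandermonde (f ∘ π)).det :=
        key (f ∘ π)
    _ = (Equiv.Perm.sign π : ℤ) •
          ((∏ i : Fin n, (-1 : R) ^ (Finset.Ioi i).card) * (Matrix.vandermonde f).det) := by
        rw [hperm, zsmul_eq_mul, zsmul_eq_mul]; ring
    _ = (Equiv.Perm.sign π : ℤ) • ∏ i : Fin n, ∏ j ∈ Finset.Ioi i, (f i - f j) := by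
        rw [key f]

/-- **Lemma 5.6.** Let `F` be a field of characteristic `≠ 2`, `E/F` a finite Galois
extension, `L` an intermediate field, and `x ∈ L` a primitive element with `m = [L : F]`.
Let `τ 1, …, τ m` enumerate the `F`-algebra homomorphisms `L → E` and set
`δ = ∏_{i<j} (τ i x − τ j x)`.  Then `δ ≠ 0`; for every `σ ∈ Gal(E/F)` inducing the
permutation `πσ` via `σ ∘ τ i = τ (πσ i)` one has `σ δ = sign(πσ) · δ`; and `δ²` equals the
discriminant of the power basis `(1, x, …, x^(m−1))`, i.e. the determinant of the Gram
matrix of the trace form. -/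
theorem galois_sign_character_eq_discriminant_character
    (F E : Type u) [Field F] [Field E] [Algebra F E]
    (h2 : (2 : F) ≠ 0)
    [FiniteDimensional F E] [IsGalois F E]
    (L : IntermediateField F E) (x : E) (hx : x ∈ L)
    (hprim : IntermediateField.adjoin F {x} = L)
    (m : ℕ) (hm : m = Module.finrank F L)
    (τ : Fin m ≃ (L →ₐ[F] E))
    (δ : E)
    (hδ : δ = ∏ i : Fin m, ∏ j ∈ Finset.Ioi i, (τ i ⟨x, hx⟩ - τ j ⟨x, hx⟩)) :
    δ ≠ 0 ∧
    (∀ (σ : E ≃ₐ[F] E) (πσ : Equiv.Perm (Fin m)),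
      (∀ i, (σ.toAlgHom.comp (τ i)) = τ (πσ i)) →
        σ δ = (Equiv.Perm.sign πσ : ℤ) • δ) ∧
    δ ^ 2 = algebraMap F E
      (Matrix.det (Matrix.of fun i j : Fin m =>
        Algebra.trace F L ((⟨x, hx⟩ : L) ^ (i : ℕ) * (⟨x, hx⟩ : L) ^ (j : ℕ)))) := by
  haveI : Algebra.IsSeparable F L := Algebra.isSeparable_tower_bot_of_isSeparable F L E
  set xL : L := (⟨x, hx⟩ : L) with hxL
  have hxint : IsIntegral F x := (IsIntegral.of_finite F x)
  -- the power basis of L generated by x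
  let eL : (IntermediateField.adjoin F {x} : IntermediateField F E) ≃ₐ[F] L :=
    IntermediateField.equivOfEq hprim
  let pb : PowerBasis F L := (IntermediateField.adjoin.powerBasis hxint).map eL
  have hgen : pb.gen = xL := by
    apply Subtype.ext
    rfl
  have hd : m = pb.dim := hm.trans pb.finrank
  -- the algebraic closure and the embedding equivalence
  let Ebar := AlgebraicClosure E
  let jE : E →ₐ[F] Ebar := IsScalarTower.toAlgHom F E Ebar
  have jEinj : Function.Injective jE := jE.injective
  have hinj : Function.Injective (fun i : Fin m => jE.comp (τ i)) := by
    intro a b hab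
    apply τ.injective
    ext y
    exact jEinj (by
      have := congrArg (fun φ : L →ₐ[F] Ebar => φ y) hab
      simpa using this)
  have hcard : Fintype.card (Fin m) = Fintype.card (L →ₐ[F] Ebar) := by
    rw [Fintype.card_fin, AlgHom.card, hm]
  let e : Fin m ≃ (L →ₐ[F] Ebar) :=
    Equiv.ofBijective _ ((Fintype.bijective_iff_injective_and_card _).2 ⟨hinj, hcard⟩)
  let e' : Fin pb.dim ≃ (L →ₐ[F] Ebar) := (finCongr hd.symm).trans e
  -- Part 3 first
  have key3 : δ ^ 2 = algebraMap F E (Algebra.discr F pb.basis) := by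
    apply jEinj
    have hprod := Algebra.discr_powerBasis_eq_prod F Ebar pb e'
    have hcastprod :
        (∏ i : Fin pb.dim, ∏ j ∈ Finset.Ioi i, (e' j pb.gen - e' i pb.gen) ^ 2) =
          ∏ i : Fin m, ∏ j ∈ Finset.Ioi i, (jE (τ j xL) - jE (τ i xL)) ^ 2 := by
      exact prod_Ioi_fin_cast hd.symm (fun i j : Fin m => (jE (τ j xL) - jE (τ i xL)) ^ 2)
    have halg : (algebraMap F Ebar) (Algebra.discr F pb.basis) =
        jE (algebraMap F E (Algebra.discr F pb.basis)) := by
      rw [IsScalarTower.algebraMap_apply F E Ebar]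
      rfl
    rw [← halg, hprod, hcastprod, hδ, map_pow, map_prod]
    rw [← Finset.prod_pow]
    refine Finset.prod_congr rfl fun i _ => ?_
    rw [map_prod, ← Finset.prod_pow]
    refine Finset.prod_congr rfl fun j _ => ?_
    rw [map_sub]
    ring
  have hdisc_ne : Algebra.discr F pb.basis ≠ 0 :=
    Algebra.discr_not_zero_of_basis F pb.basis
  have hδ2ne : δ ^ 2 ≠ 0 := by
    rw [key3]
    exact fun h => hdisc_ne ((map_eq_zero (algebraMap F E)).1 h)
  refine ⟨fun h => hδ2ne (by rw [h]; ring), ?_, ?_⟩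
  · -- Part 2
    intro σ πσ hπ
    have hτx : ∀ i, σ (τ i xL) = τ (πσ i) xL := fun i =>
      DFunLike.congr_fun (hπ i) xL
    have : σ δ = ∏ i : Fin m, ∏ j ∈ Finset.Ioi i,
        ((fun k => τ k xL) (πσ i) - (fun k => τ k xL) (πσ j)) := by
      rw [hδ, map_prod]
      refine Finset.prod_congr rfl fun i _ => ?_
      rw [map_prod]
      refine Finset.prod_congr rfl fun j _ => ?_
      rw [map_sub, hτx, hτx]
    rw [this, prod_sub_comp_perm (fun k => τ k xL) πσ, hδ]
  · -- Part 3, matching the matrix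
    rw [key3, Algebra.discr_def]
    congr 1
    have : (Algebra.traceMatrix F pb.basis).det =
        Matrix.det (Matrix.of fun i j : Fin pb.dim =>
          Algebra.trace F L (xL ^ (i : ℕ) * xL ^ (j : ℕ))) := by
      congr 1
      ext i j
      simp only [Algebra.traceMatrix_apply, Algebra.traceForm_apply, PowerBasis.coe_basis,
        hgen, Matrix.of_apply]
    rw [this,
      ← det_fin_cast hd (fun i j : Fin pb.dim => Algebra.trace F L (xL ^ (i : ℕ) * xL ^ (j : ℕ)))]
    congr 1
end
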